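/- Let n ≥ 2 and let m ∈ {0,1,…,n−1} with gcd(n, m) > 1 (where gcd(n,0) = n). Then there exist ε > 0 and a circulant matrix function F(x) = circ(f_0(x),…,f_{n−1}(x)) such that sup_{x ∈ ℂ} ‖F(x)‖ = ∞, ‖F(x + ω^m y) − Ω^{−m} F(y) Ω^{m} F(x)‖ < ε for all x, y ∈ ℂ, yet F(x + ω^m y) = Ω^{−m} F(y) Ω^{m} F(x) fails for some x, y ∈ ℂ. -/

import Mathlib

namespace Circaux
open Fin.NatCast

variable (n d : ℕ) (ω : ℂ)

noncomputable def lam (s : Fin n) (x : ℂ) : ℂ :=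
  if d ∣ (s : ℕ) then Complex.exp (ω ^ (-(s : ℤ)) * x)
  else if (s : ℕ) % d = 1 then 1/2 else 0

noncomputable def cc (s : Fin n) : ℂ := if (s : ℕ) % d = 1 ∧ ¬ d ∣ (s:ℕ) then 1/4 else 0

lemma zpow_congr (hw0 : ω ≠ 0) (hwn : ω ^ (n : ℤ) = 1) {a b : ℤ}
    (h : (n : ℤ) ∣ (a - b)) : ω ^ a = ω ^ b := by
  obtain ⟨t, ht⟩ := h
  have : a = b + n * t := by linarith
  rw [this, zpow_add₀ hw0, zpow_mul, hwn, one_zpow, mul_one]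

lemma sub_m_val [NeZero n] (m : ℕ) (hm : m < n) (s : Fin n) :
    ∃ q : ℤ, (((s - (m : Fin n) : Fin n) : ℕ) : ℤ) = (s : ℤ) - m + n * q ∧
      ((s - (m : Fin n) : Fin n) : ℕ) = ((s : ℕ) + (n - m)) % n := by
  have hmv : ((m : Fin n) : ℕ) = m := Fin.val_cast_of_lt hm
  have hv : ((s - (m : Fin n) : Fin n) : ℕ) = ((s : ℕ) + (n - m)) % n := by
    rw [Fin.sub_def]; simp [hmv, Nat.add_comm]
  have hdm := Nat.div_add_mod ((s : ℕ) + (n - m)) n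
  set q : ℕ := ((s : ℕ) + (n - m)) / n with hq
  refine ⟨1 - (q : ℤ), ?_, hv⟩
  have h1 : (s : ℕ) + (n - m) = n * q + ((s - (m : Fin n) : Fin n) : ℕ) := by
    rw [hv]; exact hdm.symm
  have h2 : (s : ℕ) + n = m + (n * q + ((s - (m : Fin n) : Fin n) : ℕ)) := by omega
  have h3 : ((s : ℕ) : ℤ) + n = m + (n * q + (((s - (m : Fin n) : Fin n) : ℕ) : ℤ)) := by
    exact_mod_cast congrArg (Nat.cast : ℕ → ℤ) h2
  push_cast at h3 ⊢
  linarith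

end Circaux

namespace Circaux
open Fin.NatCast

lemma key (n : ℕ) [NeZero n] (d : ℕ) (hd : 1 < d) (hdn : d ∣ n) (ω : ℂ)
    (hw0 : ω ≠ 0) (hwn : ω ^ (n : ℤ) = 1)
    (m : ℕ) (hm : m < n) (hdm : d ∣ m) (s : Fin n) (x y : ℂ) :
    lam n d ω s (x + ω ^ m * y)
      = lam n d ω (s - (m : Fin n)) y * lam n d ω s x + cc n d s := by
  obtain ⟨q, hq, hv⟩ := sub_m_val n m hm s
  set v : Fin n := s - (m : Fin n) with hvdef
  -- mod d facts
  have hmodd : (v : ℕ) % d = (s : ℕ) % d := by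
    obtain ⟨t, ht⟩ := Nat.dvd_sub hdn hdm
    rw [hv, Nat.mod_mod_of_dvd _ hdn, ht, Nat.add_mul_mod_self_left]
  have hdvd : d ∣ (v : ℕ) ↔ d ∣ (s : ℕ) := by
    rw [Nat.dvd_iff_mod_eq_zero, Nat.dvd_iff_mod_eq_zero, hmodd]
  by_cases h1 : d ∣ (s : ℕ)
  · -- exact exponential mode
    have h1' : d ∣ (v : ℕ) := hdvd.mpr h1
    have hnot : ¬ ((s:ℕ) % d = 1 ∧ ¬ d ∣ (s:ℕ)) := by tauto
    simp only [lam, cc, if_pos h1, if_pos h1', if_neg hnot, add_zero]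
    rw [← Complex.exp_add]
    congr 1
    have hzw : ω ^ (-(v : ℤ)) = ω ^ ((m : ℤ) - s) := by
      apply zpow_congr n ω hw0 hwn
      exact ⟨-q, by rw [hq]; ring⟩
    rw [hzw]
    have : ω ^ ((m:ℤ) - s) = ω ^ (m:ℤ) * ω ^ (-(s:ℤ)) := by
      rw [sub_eq_add_neg, zpow_add₀ hw0]
    rw [this, zpow_natCast]
    ring
  · by_cases h2 : (s : ℕ) % d = 1
    · have h1' : ¬ d ∣ (v : ℕ) := fun h => h1 (hdvd.mp h)
      have h2' : (v : ℕ) % d = 1 := by rw [hmodd]; exact h2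
      simp only [lam, cc, if_neg h1, if_neg h1', if_pos h2, if_pos h2',
        if_pos (And.intro h2 h1)]
      norm_num
    · have h1' : ¬ d ∣ (v : ℕ) := fun h => h1 (hdvd.mp h)
      have h2' : ¬ (v : ℕ) % d = 1 := by rw [hmodd]; exact h2
      have hnot : ¬ ((s:ℕ) % d = 1 ∧ ¬ d ∣ (s:ℕ)) := by tauto
      simp only [lam, cc, if_neg h1, if_neg h1', if_neg h2, if_neg h2', if_neg hnot]
      norm_num

end Circaux

namespace Circaux
open Fin.NatCast

noncomputable def FF (n d : ℕ) (ω : ℂ) (x : ℂ) : Matrix (Fin n) (Fin n) ℂ :=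
  Matrix.of fun j k =>
    (n : ℂ)⁻¹ * ∑ s : Fin n, lam n d ω s x * ω ^ ((s : ℤ) * ((k : ℤ) - (j : ℤ)))

lemma orth (n : ℕ) (hn : 0 < n) (ω : ℂ) (hprim : IsPrimitiveRoot ω n) (t : ℤ) :
    ∑ l : Fin n, ω ^ (t * (l : ℕ)) = if (n : ℤ) ∣ t then (n : ℂ) else 0 := by
  have h1 : ∀ l : Fin n, ω ^ (t * (l : ℕ)) = (ω ^ t) ^ (l : ℕ) := by
    intro l; rw [zpow_mul, zpow_natCast]
  simp only [h1]
  rw [Fin.sum_univ_eq_sum_range]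
  split_ifs with h
  · obtain ⟨c, rfl⟩ := h
    have : ω ^ ((n : ℤ) * c) = 1 := by
      rw [zpow_mul, zpow_natCast, hprim.pow_eq_one, one_zpow]
    rw [this]; simp
  · have hne : ω ^ t ≠ 1 := fun hone => h ((hprim.zpow_eq_one_iff_dvd t).mp hone)
    rw [geom_sum_eq hne]
    have : (ω ^ t) ^ n = 1 := by
      rw [← zpow_natCast, ← zpow_mul, mul_comm, zpow_mul, zpow_natCast,
        hprim.pow_eq_one, one_zpow]
    rw [this]; simp

lemma diag_inv_pow (n : ℕ) [NeZero n] (ω : ℂ) (hw0 : ω ≠ 0) (m : ℕ) :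
    (Matrix.diagonal fun i : Fin n => ω ^ (i : ℕ))⁻¹ ^ m
      = Matrix.diagonal (fun i : Fin n => ω ^ (-((i : ℕ) : ℤ) * m)) := by
  have hinv : (Matrix.diagonal fun i : Fin n => ω ^ (i : ℕ))⁻¹
      = Matrix.diagonal (fun i : Fin n => ω ^ (-((i : ℕ) : ℤ))) := by
    apply Matrix.inv_eq_right_inv
    rw [Matrix.diagonal_mul_diagonal]
    have : (fun i : Fin n => ω ^ (i : ℕ) * ω ^ (-((i : ℕ) : ℤ))) = fun _ => (1 : ℂ) := by
      funext i
      rw [← zpow_natCast ω (i : ℕ), ← zpow_add₀ hw0]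
      simp
    rw [this, Matrix.diagonal_one]
  rw [hinv, Matrix.diagonal_pow]
  have : (fun i : Fin n => ω ^ (-((i : ℕ) : ℤ))) ^ m
      = fun i : Fin n => ω ^ (-((i : ℕ) : ℤ) * m) := by
    funext i
    show (ω ^ (-((i : ℕ) : ℤ))) ^ m = _
    rw [← zpow_natCast (ω ^ (-((i : ℕ) : ℤ))) m, ← zpow_mul]
  rw [this]

lemma diag_pow (n : ℕ) [NeZero n] (ω : ℂ) (m : ℕ) :
    (Matrix.diagonal fun i : Fin n => ω ^ (i : ℕ)) ^ m
      = Matrix.diagonal (fun i : Fin n => ω ^ (((i : ℕ) : ℤ) * m)) := by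
  rw [Matrix.diagonal_pow]
  have : (fun i : Fin n => ω ^ (i : ℕ)) ^ m
      = fun i : Fin n => ω ^ (((i : ℕ) : ℤ) * m) := by
    funext i
    show (ω ^ (i : ℕ)) ^ m = _
    rw [← zpow_natCast ω (i : ℕ), ← zpow_natCast (ω ^ ((i:ℕ):ℤ)) m, ← zpow_mul]
  rw [this]

lemma prod_entry (n : ℕ) [NeZero n] (d : ℕ) (ω : ℂ)
    (hprim : IsPrimitiveRoot ω n) (hw0 : ω ≠ 0) (hwn : ω ^ (n : ℤ) = 1)
    (m : ℕ) (hm : m < n) (x y : ℂ) (j k : Fin n) :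
    ((Matrix.diagonal fun i : Fin n => ω ^ (i : ℕ))⁻¹ ^ m * FF n d ω y
      * (Matrix.diagonal fun i : Fin n => ω ^ (i : ℕ)) ^ m * FF n d ω x) j k
    = (n : ℂ)⁻¹ * ∑ s : Fin n,
        lam n d ω (s - (m : Fin n)) y * lam n d ω s x
          * ω ^ ((s : ℤ) * ((k : ℤ) - (j : ℤ))) := by
  have hn : 0 < n := Nat.pos_of_ne_zero (NeZero.ne n)
  have hn0 : (n : ℂ) ≠ 0 := Nat.cast_ne_zero.mpr hn.ne'
  rw [diag_inv_pow n ω hw0 m, diag_pow n ω m, Matrix.mul_apply]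
  have hterm : ∀ l : Fin n,
      (Matrix.diagonal (fun i : Fin n => ω ^ (-((i : ℕ) : ℤ) * m)) * FF n d ω y
        * Matrix.diagonal (fun i : Fin n => ω ^ (((i : ℕ) : ℤ) * m))) j l
        * FF n d ω x l k
      = ∑ r : Fin n, ∑ s : Fin n,
          ((n : ℂ)⁻¹ * (n : ℂ)⁻¹ * (lam n d ω r y * lam n d ω s x)
            * ω ^ ((r : ℤ) * (-(j : ℤ)) + (s : ℤ) * (k : ℤ) - (j : ℤ) * m))
          * ω ^ (((m : ℤ) + (r : ℤ) - (s : ℤ)) * ((l : ℕ) : ℤ)) := by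
    intro l
    rw [Matrix.mul_diagonal, Matrix.diagonal_mul]
    show ω ^ (-((j : ℕ) : ℤ) * m)
        * ((n : ℂ)⁻¹ * ∑ r : Fin n, lam n d ω r y * ω ^ ((r : ℤ) * ((l : ℤ) - (j : ℤ))))
        * ω ^ (((l : ℕ) : ℤ) * m)
        * ((n : ℂ)⁻¹ * ∑ s : Fin n, lam n d ω s x * ω ^ ((s : ℤ) * ((k : ℤ) - (l : ℤ))))
      = _
    rw [show ω ^ (-((j : ℕ) : ℤ) * m)
        * ((n : ℂ)⁻¹ * ∑ r : Fin n, lam n d ω r y * ω ^ ((r : ℤ) * ((l : ℤ) - (j : ℤ))))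
        * ω ^ (((l : ℕ) : ℤ) * m)
        * ((n : ℂ)⁻¹ * ∑ s : Fin n, lam n d ω s x * ω ^ ((s : ℤ) * ((k : ℤ) - (l : ℤ))))
      = ((n : ℂ)⁻¹ * (n : ℂ)⁻¹ * (ω ^ (-((j : ℕ) : ℤ) * m) * ω ^ (((l : ℕ) : ℤ) * m)))
        * ((∑ r : Fin n, lam n d ω r y * ω ^ ((r : ℤ) * ((l : ℤ) - (j : ℤ))))
          * (∑ s : Fin n, lam n d ω s x * ω ^ ((s : ℤ) * ((k : ℤ) - (l : ℤ))))) from by ring]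
    rw [Finset.sum_mul_sum, Finset.mul_sum]
    refine Finset.sum_congr rfl fun r _ => ?_
    rw [Finset.mul_sum]
    refine Finset.sum_congr rfl fun s _ => ?_
    have hmerge : ω ^ ((r : ℤ) * (-(j : ℤ)) + (s : ℤ) * (k : ℤ) - (j : ℤ) * m)
        * ω ^ (((m : ℤ) + (r : ℤ) - (s : ℤ)) * ((l : ℕ) : ℤ))
        = ω ^ (-((j : ℕ) : ℤ) * m) * ω ^ (((l : ℕ) : ℤ) * m)
          * (ω ^ ((r : ℤ) * ((l : ℤ) - (j : ℤ))) * ω ^ ((s : ℤ) * ((k : ℤ) - (l : ℤ)))) := by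
      rw [← zpow_add₀ hw0, ← zpow_add₀ hw0, ← zpow_add₀ hw0, ← zpow_add₀ hw0]
      congr 1; ring
    rw [show ((n : ℂ)⁻¹ * (n : ℂ)⁻¹ * (lam n d ω r y * lam n d ω s x)
            * ω ^ ((r : ℤ) * (-(j : ℤ)) + (s : ℤ) * (k : ℤ) - (j : ℤ) * m))
          * ω ^ (((m : ℤ) + (r : ℤ) - (s : ℤ)) * ((l : ℕ) : ℤ))
        = ((n : ℂ)⁻¹ * (n : ℂ)⁻¹ * (lam n d ω r y * lam n d ω s x))
          * (ω ^ ((r : ℤ) * (-(j : ℤ)) + (s : ℤ) * (k : ℤ) - (j : ℤ) * m)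
            * ω ^ (((m : ℤ) + (r : ℤ) - (s : ℤ)) * ((l : ℕ) : ℤ))) from by ring,
      hmerge]
    ring
  rw [Finset.sum_congr rfl fun l _ => hterm l]
  rw [Finset.sum_comm]
  have step2 : ∀ r : Fin n, (∑ l : Fin n, ∑ s : Fin n,
        ((n : ℂ)⁻¹ * (n : ℂ)⁻¹ * (lam n d ω r y * lam n d ω s x)
          * ω ^ ((r : ℤ) * (-(j : ℤ)) + (s : ℤ) * (k : ℤ) - (j : ℤ) * m))
        * ω ^ (((m : ℤ) + (r : ℤ) - (s : ℤ)) * ((l : ℕ) : ℤ)))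
      = ∑ s : Fin n,
        ((n : ℂ)⁻¹ * (n : ℂ)⁻¹ * (lam n d ω r y * lam n d ω s x)
          * ω ^ ((r : ℤ) * (-(j : ℤ)) + (s : ℤ) * (k : ℤ) - (j : ℤ) * m))
        * (if (n : ℤ) ∣ ((m : ℤ) + (r : ℤ) - (s : ℤ)) then (n : ℂ) else 0) := by
    intro r
    rw [Finset.sum_comm]
    refine Finset.sum_congr rfl fun s _ => ?_
    rw [← Finset.mul_sum, orth n hn ω hprim]
  rw [Finset.sum_congr rfl fun r _ => step2 r, Finset.sum_comm]
  rw [Finset.mul_sum]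
  refine Finset.sum_congr rfl fun s _ => ?_
  -- collapse inner sum over r at r = s - m
  obtain ⟨q, hq, hv⟩ := sub_m_val n m hm s
  set v : Fin n := s - (m : Fin n) with hvdef
  rw [Finset.sum_eq_single v]
  · have hdvd : (n : ℤ) ∣ ((m : ℤ) + (v : ℤ) - (s : ℤ)) := ⟨q, by rw [hq]; ring⟩
    rw [if_pos hdvd]
    have hzw : ω ^ ((v : ℤ) * (-(j : ℤ)) + (s : ℤ) * (k : ℤ) - (j : ℤ) * m)
        = ω ^ ((s : ℤ) * ((k : ℤ) - (j : ℤ))) := by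
      apply zpow_congr n ω hw0 hwn
      exact ⟨-(j : ℤ) * q, by rw [hq]; ring⟩
    rw [hzw]
    field_simp
  · intro r _ hr
    rw [if_neg, mul_zero]
    intro hdvd
    apply hr
    have hdvd2 : (n : ℤ) ∣ ((m : ℤ) + (v : ℤ) - (s : ℤ)) := ⟨q, by rw [hq]; ring⟩
    have hdvd3 : (n : ℤ) ∣ ((r : ℤ) - (v : ℤ)) := by
      have := dvd_sub hdvd hdvd2
      have heq : ((m : ℤ) + (r : ℤ) - (s : ℤ)) - ((m : ℤ) + (v : ℤ) - (s : ℤ))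
          = (r : ℤ) - (v : ℤ) := by ring
      rwa [heq] at this
    have habs : |((r : ℤ) - (v : ℤ))| < n := by
      have h1 : (r : ℤ) < n := by exact_mod_cast r.isLt
      have h2 : (v : ℤ) < n := by exact_mod_cast v.isLt
      have h3 : 0 ≤ (r : ℤ) := Int.natCast_nonneg _
      have h4 : 0 ≤ (v : ℤ) := Int.natCast_nonneg _
      rw [abs_lt]; constructor <;> linarith
    have h0 : (r : ℤ) - (v : ℤ) = 0 := Int.eq_zero_of_abs_lt_dvd hdvd3 habs
    have : (r : ℤ) = (v : ℤ) := by linarith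
    exact Fin.ext (by exact_mod_cast this)
  · intro hv'
    exact absurd (Finset.mem_univ v) hv'

end Circaux

namespace Circaux
open Fin.NatCast

noncomputable def EE (n d : ℕ) (ω : ℂ) : Matrix (Fin n) (Fin n) ℂ :=
  Matrix.of fun j k =>
    (n : ℂ)⁻¹ * ∑ s : Fin n, cc n d s * ω ^ ((s : ℤ) * ((k : ℤ) - (j : ℤ)))

lemma diff_eq (n : ℕ) [NeZero n] (d : ℕ) (hd : 1 < d) (hdn : d ∣ n) (ω : ℂ)
    (hprim : IsPrimitiveRoot ω n) (hw0 : ω ≠ 0) (hwn : ω ^ (n : ℤ) = 1)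
    (m : ℕ) (hm : m < n) (hdm : d ∣ m) (x y : ℂ) :
    FF n d ω (x + ω ^ m * y)
      - (Matrix.diagonal fun i : Fin n => ω ^ (i : ℕ))⁻¹ ^ m * FF n d ω y
        * (Matrix.diagonal fun i : Fin n => ω ^ (i : ℕ)) ^ m * FF n d ω x
      = EE n d ω := by
  ext j k
  rw [Matrix.sub_apply, prod_entry n d ω hprim hw0 hwn m hm x y j k]
  show (n : ℂ)⁻¹ * ∑ s : Fin n, lam n d ω s (x + ω ^ m * y)
        * ω ^ ((s : ℤ) * ((k : ℤ) - (j : ℤ))) - _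
      = (n : ℂ)⁻¹ * ∑ s : Fin n, cc n d s * ω ^ ((s : ℤ) * ((k : ℤ) - (j : ℤ)))
  have hk : ∀ s : Fin n, lam n d ω s (x + ω ^ m * y)
        * ω ^ ((s : ℤ) * ((k : ℤ) - (j : ℤ)))
      = lam n d ω (s - (m : Fin n)) y * lam n d ω s x
          * ω ^ ((s : ℤ) * ((k : ℤ) - (j : ℤ)))
        + cc n d s * ω ^ ((s : ℤ) * ((k : ℤ) - (j : ℤ))) := by
    intro s
    rw [key n d hd hdn ω hw0 hwn m hm hdm s x y]
    ring
  rw [Finset.sum_congr rfl fun s _ => hk s, Finset.sum_add_distrib]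
  ring

lemma row_sum (n : ℕ) [NeZero n] (d : ℕ) (hdn : d ∣ n) (ω : ℂ)
    (hprim : IsPrimitiveRoot ω n) (hw0 : ω ≠ 0) (x : ℂ) :
    ∑ k : Fin n, FF n d ω x 0 k = Complex.exp x := by
  have hn : 0 < n := Nat.pos_of_ne_zero (NeZero.ne n)
  have hn0 : (n : ℂ) ≠ 0 := Nat.cast_ne_zero.mpr hn.ne'
  have h1 : ∀ k : Fin n, FF n d ω x 0 k
      = ∑ s : Fin n, (n : ℂ)⁻¹ * lam n d ω s x * ω ^ ((s : ℤ) * ((k : ℕ) : ℤ)) := by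
    intro k
    show (n : ℂ)⁻¹ * ∑ s : Fin n, lam n d ω s x * ω ^ ((s : ℤ) * ((k : ℤ) - ((0 : Fin n) : ℤ))) = _
    rw [Finset.mul_sum]
    refine Finset.sum_congr rfl fun s _ => ?_
    have : ((k : ℤ) - ((0 : Fin n) : ℤ)) = ((k : ℕ) : ℤ) := by simp
    rw [this]; ring
  rw [Finset.sum_congr rfl fun k _ => h1 k, Finset.sum_comm]
  have h2 : ∀ s : Fin n, (∑ k : Fin n, (n : ℂ)⁻¹ * lam n d ω s x * ω ^ ((s : ℤ) * ((k : ℕ) : ℤ)))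
      = (n : ℂ)⁻¹ * lam n d ω s x * (if (n : ℤ) ∣ (s : ℤ) then (n : ℂ) else 0) := by
    intro s
    rw [← Finset.mul_sum, orth n hn ω hprim]
  rw [Finset.sum_congr rfl fun s _ => h2 s]
  rw [Finset.sum_eq_single (0 : Fin n)]
  · have hdvd : (n : ℤ) ∣ ((0 : Fin n) : ℤ) := by simp
    rw [if_pos hdvd]
    have : lam n d ω 0 x = Complex.exp x := by
      have h0 : d ∣ ((0 : Fin n) : ℕ) := by simp
      rw [lam, if_pos h0]
      norm_num
    rw [this]
    field_simp
  · intro s _ hs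
    rw [if_neg, mul_zero]
    intro hdvd
    apply hs
    have h1 : (s : ℤ) < n := by exact_mod_cast s.isLt
    have h2 : (0 : ℤ) ≤ (s : ℤ) := Int.natCast_nonneg _
    have habs : |(s : ℤ) - 0| < n := by rw [abs_lt]; constructor <;> linarith
    have hd2 : (n : ℤ) ∣ ((s : ℤ) - 0) := by simpa using hdvd
    have h0 : (s : ℤ) - 0 = 0 := Int.eq_zero_of_abs_lt_dvd hd2 habs
    have : (s : ℤ) = 0 := by linarith
    exact Fin.ext (by rw [Fin.val_zero]; exact_mod_cast this)
  · intro h; exact absurd (Finset.mem_univ _) h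

lemma fin_sub_cast (n : ℕ) [NeZero n] (ω : ℂ) (hw0 : ω ≠ 0) (hwn : ω ^ (n : ℤ) = 1)
    (s j k : Fin n) :
    ω ^ ((s : ℤ) * (((k - j : Fin n) : ℕ) : ℤ)) = ω ^ ((s : ℤ) * ((k : ℤ) - (j : ℤ))) := by
  obtain ⟨q, hq, -⟩ := sub_m_val n (j : ℕ) j.isLt k
  rw [Fin.cast_val_eq_self j] at hq
  apply zpow_congr n ω hw0 hwn
  exact ⟨(s : ℤ) * q, by rw [hq]; push_cast; ring⟩

end Circaux

namespace Circaux

lemma EE_entry_ne (n : ℕ) [NeZero n] (hn2 : 2 ≤ n) (d : ℕ) (hd : 1 < d) (ω : ℂ) :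
    EE n d ω 0 0 ≠ 0 := by
  have hn0 : (n : ℂ) ≠ 0 := Nat.cast_ne_zero.mpr (by omega)
  have hone : ∀ s : Fin n, cc n d s * ω ^ ((s : ℤ) * (((0 : Fin n) : ℤ) - ((0 : Fin n) : ℤ)))
      = cc n d s := by
    intro s; rw [sub_self, mul_zero, zpow_zero, mul_one]
  have hEE : EE n d ω 0 0 = (n : ℂ)⁻¹ * ∑ s : Fin n, cc n d s := by
    show (n : ℂ)⁻¹ * ∑ s : Fin n,
        cc n d s * ω ^ ((s : ℤ) * (((0 : Fin n) : ℤ) - ((0 : Fin n) : ℤ))) = _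
    rw [Finset.sum_congr rfl fun s _ => hone s]
  rw [hEE]
  apply mul_ne_zero (inv_ne_zero hn0)
  have hre : ∀ s : Fin n, 0 ≤ (cc n d s).re := by
    intro s; rw [cc]; split_ifs <;> norm_num
  have hterm : cc n d ⟨1, by omega⟩ = 1/4 := by
    rw [cc, if_pos]
    refine ⟨Nat.mod_eq_of_lt hd, fun h => ?_⟩
    have := Nat.le_of_dvd one_pos h
    omega
  have hle : (1/4 : ℝ) ≤ (∑ s : Fin n, cc n d s).re := by
    rw [Complex.re_sum]
    calc (1/4 : ℝ) = (cc n d ⟨1, by omega⟩).re := by rw [hterm]; norm_num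
      _ ≤ ∑ s : Fin n, (cc n d s).re :=
          Finset.single_le_sum (fun s _ => hre s) (Finset.mem_univ _)
  intro h
  rw [h] at hle
  norm_num at hle

end Circaux



/-- Let `n ≥ 2` and `m ∈ {0,…,n−1}` with `gcd(n,m) > 1`
(where `gcd(n,0) = n`). Then there exist `ε > 0` and a circulant matrix
function `F(x) = circ(f₀(x),…,f_{n−1}(x))` such that `sup_x ‖F(x)‖ = ∞`
(with the 1-norm `‖A‖ = max_i Σ_j |a_{ij}|`),
`‖F(x + ω^m y) − Ω^(−m) F(y) Ω^m F(x)‖ < ε` for all `x, y`, yet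
`F(x + ω^m y) = Ω^(−m) F(y) Ω^m F(x)` fails for some `x, y`. -/
theorem instability_of_circulant_equation_noncoprime
    (n : ℕ) (hn : 2 ≤ n)
    (ω : ℂ) (hω : ω = Complex.exp (2 * Real.pi * Complex.I / n))
    (m : ℕ) (hm : m < n) (hgcd : 1 < Nat.gcd n m)
    (Om : Matrix (Fin n) (Fin n) ℂ)
    (hOm : Om = Matrix.diagonal fun j : Fin n => ω ^ (j : ℕ))
    (Nrm : Matrix (Fin n) (Fin n) ℂ → ℝ)
    (hNrm : ∀ A : Matrix (Fin n) (Fin n) ℂ,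
      Nrm A = Finset.univ.sup' (Finset.univ_nonempty_iff.mpr ⟨⟨0, by omega⟩⟩)
        (fun i : Fin n => ∑ j : Fin n, ‖A i j‖)) :
    ∃ ε : ℝ, 0 < ε ∧
      ∃ f : Fin n → ℂ → ℂ, ∃ F : ℂ → Matrix (Fin n) (Fin n) ℂ,
        (∀ (x : ℂ) (j k : Fin n), F x j k = f (k - j) x) ∧
        (∀ C : ℝ, ∃ x : ℂ, C < Nrm (F x)) ∧
        (∀ x y : ℂ,
          Nrm (F (x + ω ^ m * y) - Om⁻¹ ^ m * F y * Om ^ m * F x) < ε) ∧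
        (∃ x y : ℂ, F (x + ω ^ m * y) ≠ Om⁻¹ ^ m * F y * Om ^ m * F x) := by
  haveI : NeZero n := ⟨by omega⟩
  have hn0 : n ≠ 0 := by omega
  have hprim : IsPrimitiveRoot ω n := hω ▸ Complex.isPrimitiveRoot_exp n hn0
  have hw0 : ω ≠ 0 := hprim.ne_zero hn0
  have hwn : ω ^ (n : ℤ) = 1 := by rw [zpow_natCast, hprim.pow_eq_one]
  set d : ℕ := Nat.gcd n m with hddef
  have hdn : d ∣ n := Nat.gcd_dvd_left n m
  have hdm : d ∣ m := Nat.gcd_dvd_right n m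
  subst hOm
  -- lower bound helper for Nrm
  have hNrm_ge : ∀ A : Matrix (Fin n) (Fin n) ℂ,
      ‖∑ k : Fin n, A 0 k‖ ≤ Nrm A := by
    intro A
    rw [hNrm A]
    calc ‖∑ k : Fin n, A 0 k‖ ≤ ∑ k : Fin n, ‖A 0 k‖ :=
          norm_sum_le _ _
      _ ≤ _ := Finset.le_sup' (fun i : Fin n => ∑ j : Fin n, ‖A i j‖) (Finset.mem_univ (0 : Fin n))
  have hNrm_nonneg : ∀ A : Matrix (Fin n) (Fin n) ℂ, 0 ≤ Nrm A := by
    intro A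
    calc (0:ℝ) ≤ ‖∑ k : Fin n, A 0 k‖ := norm_nonneg _
      _ ≤ Nrm A := hNrm_ge A
  refine ⟨Nrm (Circaux.EE n d ω) + 1, by linarith [hNrm_nonneg (Circaux.EE n d ω)], ?_⟩
  refine ⟨fun l x => (n : ℂ)⁻¹ * ∑ s : Fin n,
      Circaux.lam n d ω s x * ω ^ ((s : ℤ) * ((l : ℕ) : ℤ)), Circaux.FF n d ω, ?_, ?_, ?_, ?_⟩
  · -- circulant structure
    intro x j k
    show (n : ℂ)⁻¹ * ∑ s : Fin n,
        Circaux.lam n d ω s x * ω ^ ((s : ℤ) * ((k : ℤ) - (j : ℤ))) = _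
    congr 1
    refine Finset.sum_congr rfl fun s _ => ?_
    rw [Circaux.fin_sub_cast n ω hw0 hwn s j k]
  · -- unboundedness
    intro C
    refine ⟨(C : ℂ), ?_⟩
    have h1 : ‖∑ k : Fin n, Circaux.FF n d ω (C : ℂ) 0 k‖ = Real.exp C := by
      rw [Circaux.row_sum n d hdn ω hprim hw0 (C : ℂ), Complex.norm_exp]
      norm_num
    have h2 := hNrm_ge (Circaux.FF n d ω (C : ℂ))
    rw [h1] at h2
    have h3 : C + 1 ≤ Real.exp C := Real.add_one_le_exp C
    linarith
  · -- uniform bound by constant error matrix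
    intro x y
    rw [Circaux.diff_eq n d hgcd hdn ω hprim hw0 hwn m hm hdm x y]
    linarith
  · -- failure of exact equation
    refine ⟨0, 0, fun heq => ?_⟩
    have h0 := Circaux.diff_eq n d hgcd hdn ω hprim hw0 hwn m hm hdm 0 0
    rw [heq, sub_self] at h0
    exact Circaux.EE_entry_ne n hn d hgcd ω (by rw [← h0]; rfl)
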